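/- The biHecke monoid is acyclic: for any f in the biHecke monoid M(W) of a finite Coxeter group W, there exists k > 0 such that f^{k+1} = f^k. In particular, f^k is idempotent. -/

import Mathlib

open scoped Classical

noncomputable section

variable {B W : Type*} [Group W] {M : CoxeterMatrix B}

/-- The elementary bubble antisorting operator `π_i` on a Coxeter group:
`w·π_i = w` if `i` is a right descent of `w`, and `w·π_i = w s_i` otherwise. -/
noncomputable def piOp (cs : CoxeterSystem M W) (i : B) : W → W :=
  fun w => if cs.IsRightDescent w i then w else w * cs.simple i

/-- The elementary bubble sorting operator `π̄_i` on a Coxeter group: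
`w·π̄_i = w s_i` if `i` is a right descent of `w`, and `w·π̄_i = w` otherwise. -/
noncomputable def pibOp (cs : CoxeterSystem M W) (i : B) : W → W :=
  fun w => if cs.IsRightDescent w i then w * cs.simple i else w

/-- The biHecke monoid: the submonoid of `Function.End W` generated by the antisorting
operators `π_i` and the sorting operators `π̄_i`. -/
noncomputable def biHecke (cs : CoxeterSystem M W) : Submonoid (Function.End W) :=
  Submonoid.closure ({f | ∃ i, f = piOp cs i} ∪ {f | ∃ i, f = pibOp cs i})

/-- Left weak order: `u ≤_L v` iff `ℓ(v u⁻¹) + ℓ(u) = ℓ(v)`. -/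
noncomputable def leL (cs : CoxeterSystem M W) (u v : W) : Prop :=
  cs.length (v * u⁻¹) + cs.length u = cs.length v

/-- Right weak order: `u ≤_R v` iff `ℓ(u) + ℓ(u⁻¹ v) = ℓ(v)`. -/
noncomputable def leR (cs : CoxeterSystem M W) (u v : W) : Prop :=
  cs.length u + cs.length (u⁻¹ * v) = cs.length v

/-- Bruhat order: `u ≤_B v` iff some reduced word of `v` has a subword with product `u`. -/
noncomputable def leB (cs : CoxeterSystem M W) (u v : W) : Prop :=
  ∃ l : List B, cs.IsReduced l ∧ cs.wordProd l = v ∧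
    ∃ l' : List B, l'.Sublist l ∧ cs.wordProd l' = u

/-- Right action of a word of operators: apply the operators from left to right. -/
noncomputable def actWord (ops : B → W → W) (l : List B) (w : W) : W :=
  l.foldl (fun x i => ops i x) w

/-- The function `e_w = π_{w⁻¹ w₀} π̄_{w₀ w}` (given reduced words `l1` for `w⁻¹ w₀` and
`l2` for `w₀ w`), acting on the right. -/
noncomputable def eIdem (cs : CoxeterSystem M W) (l1 l2 : List B) : W → W :=
  fun x => actWord (pibOp cs) l2 (actWord (piOp cs) l1 x)

/-- The parabolic subgroup `W_K`. -/
noncomputable def parab (cs : CoxeterSystem M W) (K : Set B) : Subgroup W :=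
  Subgroup.closure (cs.simple '' K)

/-- `K` is a right block of `w` if `w W_K = W_J w` for some `J`. -/
noncomputable def isRightBlock (cs : CoxeterSystem M W) (w : W) (K : Set B) : Prop :=
  ∃ J : Set B, (fun x => w * x) '' (parab cs K : Set W) = (fun x => x * w) '' (parab cs J : Set W)

/-- `J` is a left block of `w` if `w W_K = W_J w` for some `K`. -/
noncomputable def isLeftBlock (cs : CoxeterSystem M W) (w : W) (J : Set B) : Prop :=
  ∃ K : Set B, (fun x => w * x) '' (parab cs K : Set W) = (fun x => x * w) '' (parab cs J : Set W)

/-- The cutting relation: `v ⊑ w` iff `v = w^K` for some right block `K` of `w`, i.e.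
`w = v · u` with `u ∈ W_K` and `v` has no right descents in `K`. -/
noncomputable def cuts (cs : CoxeterSystem M W) (v w : W) : Prop :=
  ∃ K J : Set B,
    ((fun x => w * x) '' (parab cs K : Set W) = (fun x => x * w) '' (parab cs J : Set W)) ∧
    ∃ u ∈ parab cs K, w = v * u ∧ ∀ k ∈ K, ¬ cs.IsRightDescent v k

/-- Covering relation of left weak order. -/
noncomputable def covL (cs : CoxeterSystem M W) (x y : W) : Prop :=
  leL cs x y ∧ x ≠ y ∧ ∀ z, leL cs x z → leL cs z y → z = x ∨ z = y

end

/-!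
Every `f ∈ M(W)` is monotone for the left weak order (`u ≤_L v` iff `ℓ(v u⁻¹) + ℓ(u) = ℓ(v)`),
and for `u ≤_L v` it either keeps the quotient `v u⁻¹` or makes it strictly shorter. For a
generator `π_i` or `π̄_i` moving only one of `u`, `v` this is the exchange property, proved
from the reflection cocycle. Consequently a periodic point `w` of `f` is fixed: the orbit of `1`
reaches a fixed point `a ≤_L w`, and going once around the cycle of `w` the quotient `w a⁻¹`
cannot shrink, so it never changes. As `W` is finite, every orbit runs into a cycle, so a
suitable power `f^k` maps `W` into the fixed points of `f`.
-/

namespace CoxeterSystem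

variable {B W : Type*} [Group W] {M : CoxeterMatrix B} (cs : CoxeterSystem M W)

local prefix:100 "s " => cs.simple
local prefix:100 "π " => cs.wordProd
local prefix:100 "ℓ " => cs.length
local prefix:100 "ris " => cs.rightInvSeq
local prefix:100 "lis " => cs.leftInvSeq

theorem involutive_simple_mul_mul_simple (i : B) :
    Function.Involutive fun t : W => s i * t * s i :=
  fun t => by simp [mul_assoc]

theorem simple_mul_mul_simple_eq_simple_iff (i : B) (t : W) : s i * t * s i = s i ↔ t = s i := by
  rw [(involutive_simple_mul_mul_simple cs i).eq_iff]
  simp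

/- Björner–Brenti's construction of the reflection cocycle: once these permutations are shown to
satisfy the Coxeter relations, the `ZMod 2` coordinate of `π ω` acting on `(t, e)` records the
parity of the number of occurrences of `t` in the inversion sequence of `ω`, which therefore
depends only on `π ω`. -/
noncomputable def reflectionPerm (i : B) : Equiv.Perm (W × ZMod 2) :=
  Function.Involutive.toPerm (fun x => (s i * x.1 * s i, x.2 + if x.1 = s i then 1 else 0)) <| by
    rintro ⟨t, e⟩
    simp only [involutive_simple_mul_mul_simple cs i t, simple_mul_mul_simple_eq_simple_iff,
      add_assoc, ← two_mul, CharTwo.two_eq_zero, zero_mul, add_zero]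

theorem reflectionPerm_apply (i : B) (t : W) (e : ZMod 2) :
    cs.reflectionPerm i (t, e) = (s i * t * s i, e + if t = s i then 1 else 0) := rfl

theorem reflectionPerm_inv (i : B) : (cs.reflectionPerm i)⁻¹ = cs.reflectionPerm i :=
  Function.Involutive.toPerm_symm _

theorem count_leftInvSeq_cons (i : B) (ω : List B) (t : W) :
    (lis (i :: ω)).count t = (lis ω).count (s i * t * s i) + if t = s i then 1 else 0 := by
  rw [leftInvSeq, List.count_cons,
    ← List.count_map_of_injective _ _ (MulAut.conj (s i)).injective (s i * t * s i)]
  simp [mul_assoc, @eq_comm _ (s i) t]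

theorem prod_map_reflectionPerm_inv_apply (ω : List B) (t : W) (e : ZMod 2) :
    (ω.map cs.reflectionPerm).prod⁻¹ (t, e) =
      ((π ω)⁻¹ * t * π ω, e + (lis ω).count t) := by
  induction ω generalizing t e with
  | nil => simp
  | cons i ω ih =>
    rw [List.map_cons, List.prod_cons, mul_inv_rev, Equiv.Perm.mul_apply, reflectionPerm_inv,
      reflectionPerm_apply, ih, count_leftInvSeq_cons, wordProd_cons]
    simp only [mul_inv_rev, inv_simple, mul_assoc, Nat.cast_add, Prod.mk.injEq, true_and]
    push_cast
    ring

theorem prod_map_alternatingWord_two_mul {G : Type*} [Monoid G] (f : B → G) (i j : B) (m : ℕ) :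
    ((alternatingWord i j (2 * m)).map f).prod = (f i * f j) ^ m := by
  induction m with
  | zero => simp [alternatingWord]
  | succ m ih =>
    have hword : alternatingWord i j (2 * (m + 1)) = i :: j :: alternatingWord i j (2 * m) := by
      rw [show 2 * (m + 1) = 2 * m + 1 + 1 by ring, alternatingWord_succ', alternatingWord_succ']
      simp
    rw [hword, List.map_cons, List.map_cons, List.prod_cons, List.prod_cons, ih, pow_succ',
      mul_assoc]

theorem getElem_leftInvSeq_alternatingWord_eq_mul_pow (i j : B) (p k : ℕ) (h : k < 2 * p) :
    (lis (alternatingWord i j (2 * p)))[k]'(by simp; lia) = s i * (s j * s i) ^ k := by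
  rw [getElem_leftInvSeq_alternatingWord cs i j p k h, prod_alternatingWord_eq_mul_pow]
  simp [Nat.mul_add_div]

theorem even_count_leftInvSeq_alternatingWord (i j : B) (t : W) :
    Even ((lis (alternatingWord i j (2 * M i j))).count t) := by
  set L := lis (alternatingWord i j (2 * M i j))
  have hlen : L.length = 2 * M i j := by simp [L]
  have hperiodic : L.drop (M i j) = L.take (M i j) := by
    apply List.ext_getElem (by simp [hlen]; lia)
    intro k h₁ _
    rw [List.length_drop, hlen] at h₁
    simp only [List.getElem_drop, List.getElem_take, L]
    rw [getElem_leftInvSeq_alternatingWord_eq_mul_pow cs i j _ _ (by lia),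
      getElem_leftInvSeq_alternatingWord_eq_mul_pow cs i j _ _ (by lia), pow_add,
      simple_mul_simple_pow', one_mul]
  rw [← List.take_append_drop (M i j) L, hperiodic, List.count_append]
  exact ⟨_, rfl⟩

theorem isLiftable_reflectionPerm : M.IsLiftable cs.reflectionPerm := by
  intro i j
  rw [← prod_map_alternatingWord_two_mul, ← inv_eq_one]
  ext ⟨t, e⟩ : 1
  rw [prod_map_reflectionPerm_inv_apply, prod_alternatingWord_eq_mul_pow]
  obtain ⟨c, hc⟩ := cs.even_count_leftInvSeq_alternatingWord i j t
  simp [hc, CharTwo.add_self_eq_zero]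

noncomputable def reflectionRep : W →* Equiv.Perm (W × ZMod 2) :=
  cs.lift ⟨cs.reflectionPerm, cs.isLiftable_reflectionPerm⟩

theorem reflectionRep_wordProd (ω : List B) :
    cs.reflectionRep (π ω) = (ω.map cs.reflectionPerm).prod := by
  rw [wordProd, map_list_prod, List.map_map]
  congr 1
  exact List.map_congr_left fun i _ => cs.lift_apply_simple _ i

theorem natCast_count_leftInvSeq_eq {ω ω' : List B} (h : π ω = π ω') (t : W) :
    ((lis ω).count t : ZMod 2) = (lis ω').count t := by
  have key := congrArg (fun g => ((g⁻¹ : Equiv.Perm (W × ZMod 2)) (t, 0)).2)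
    (congrArg cs.reflectionRep h)
  simpa [reflectionRep_wordProd, prod_map_reflectionPerm_inv_apply] using key

/- The exchange property. The parity of the number of occurrences of `s i` in `lis ω` depends
only on `π ω`, and it is odd for `ω = i :: α` with `α` a reduced word of `s i * π ω`. -/
theorem simple_mem_leftInvSeq {ω : List B} {i : B}
    (hi : cs.IsLeftDescent (π ω) i) : s i ∈ lis ω := by
  obtain ⟨α, hα, hαω⟩ := cs.exists_isReduced (s i * π ω)
  have hprod : π (i :: α) = π ω := by
    rw [wordProd_cons, ← hαω, simple_mul_simple_cancel_left]
  have hnotmem : s i ∉ lis α := fun hmem => by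
    have := cs.isLeftInversion_of_mem_leftInvSeq hα hmem
    rw [isLeftInversion_simple_iff_isLeftDescent, ← hαω, IsLeftDescent,
      simple_mul_simple_cancel_left] at this
    exact (lt_asymm hi this).elim
  have hodd := cs.natCast_count_leftInvSeq_eq hprod (s i)
  rw [count_leftInvSeq_cons, simple_mul_simple_self, one_mul,
    List.count_eq_zero_of_not_mem hnotmem, if_pos rfl] at hodd
  rw [← List.count_pos_iff, Nat.pos_iff_ne_zero]
  intro hzero
  simp [hzero] at hodd

theorem simple_mem_rightInvSeq {ω : List B} {i : B}
    (hi : cs.IsRightDescent (π ω) i) : s i ∈ ris ω := by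
  have h := cs.simple_mem_leftInvSeq (ω := ω.reverse) (i := i) (by
    rwa [wordProd_reverse, isLeftDescent_inv_iff])
  rwa [← List.mem_reverse, ← rightInvSeq_reverse, List.reverse_reverse] at h

theorem rightInvSeq_append (ω ω' : List B) :
    ris (ω ++ ω') = (ris ω).map (MulAut.conj (π ω')⁻¹) ++ ris ω' := by
  induction ω with
  | nil => simp
  | cons i ω ih =>
    rw [List.cons_append, rightInvSeq, ih, rightInvSeq, List.map_cons, List.cons_append,
      wordProd_append]
    simp [mul_assoc]

theorem length_mul_simple_mul_inv_lt {u v : W} {i : B} (hv : cs.IsRightDescent v i)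
    (hu : ¬cs.IsRightDescent u i) : ℓ (v * s i * u⁻¹) < ℓ (v * u⁻¹) := by
  obtain ⟨a, ha, hax⟩ := cs.exists_isReduced (v * u⁻¹)
  obtain ⟨b, hb, hbu⟩ := cs.exists_isReduced u
  have hv' : cs.IsRightDescent (π (a ++ b)) i := by
    rwa [wordProd_append, ← hax, ← hbu, inv_mul_cancel_right]
  have hmem := cs.simple_mem_rightInvSeq hv'
  rw [rightInvSeq_append, List.mem_append, List.mem_map] at hmem
  -- `s i` cannot come from the `u` part, so `u * s i * u⁻¹` is a right inversion of `v * u⁻¹`.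
  rcases hmem with ⟨r, hr, hconj⟩ | hmem
  · have hr' : r = u * s i * u⁻¹ := by
      rw [← hconj, ← hbu]
      simp [mul_assoc]
    have := (cs.isRightInversion_of_mem_rightInvSeq ha hr).2
    rwa [← hax, hr', show v * u⁻¹ * (u * s i * u⁻¹) = v * s i * u⁻¹ by group] at this
  · have := cs.isRightInversion_of_mem_rightInvSeq hb hmem
    rw [isRightInversion_simple_iff_isRightDescent, ← hbu] at this
    exact (hu this).elim

end CoxeterSystem

section LeftWeakOrder

variable {B W : Type*} [Group W] {M : CoxeterMatrix B} {cs : CoxeterSystem M W}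

local prefix:100 "s " => cs.simple
local prefix:100 "ℓ " => cs.length

theorem leL_one (w : W) : leL cs 1 w := by
  simp [leL]

namespace leL

variable {u v : W} {i : B}

theorem length_le (h : leL cs u v) : ℓ u ≤ ℓ v :=
  h ▸ Nat.le_add_left _ _

theorem eq_of_length_le (h : leL cs u v) (hvu : ℓ v ≤ ℓ u) : v = u := by
  have : ℓ (v * u⁻¹) = 0 := by unfold leL at h; omega
  exact mul_inv_eq_one.mp (cs.length_eq_zero_iff.mp this)

theorem isRightDescent (h : leL cs u v) (hu : cs.IsRightDescent u i) :
    cs.IsRightDescent v i := by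
  have hu' := cs.isRightDescent_iff.mp hu
  have hsplit : ℓ (v * s i) ≤ ℓ (v * u⁻¹) + ℓ (u * s i) := by
    simpa [mul_assoc] using cs.length_mul_le (v * u⁻¹) (u * s i)
  unfold leL at h
  show ℓ (v * s i) < ℓ v
  omega

theorem mul_simple (h : leL cs u v) (hi : cs.IsRightDescent u i ↔ cs.IsRightDescent v i) :
    leL cs (u * s i) (v * s i) := by
  unfold leL at h ⊢
  rw [show v * s i * (u * s i)⁻¹ = v * u⁻¹ by simp [mul_assoc]]
  by_cases hu : cs.IsRightDescent u i
  · have hv := hi.mp hu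
    rw [cs.isRightDescent_iff] at hu hv
    omega
  · have hv := mt hi.mpr hu
    rw [cs.not_isRightDescent_iff] at hu hv
    omega

theorem length_mul_simple_mul_inv_add_one (h : leL cs u v) (hv : cs.IsRightDescent v i)
    (hu : ¬cs.IsRightDescent u i) : ℓ (v * s i * u⁻¹) + 1 = ℓ (v * u⁻¹) := by
  have hlt := cs.length_mul_simple_mul_inv_lt hv hu
  have hsplit : ℓ (v * s i) ≤ ℓ (v * s i * u⁻¹) + ℓ u := by
    simpa using cs.length_mul_le (v * s i * u⁻¹) u
  have hv' := cs.isRightDescent_iff.mp hv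
  unfold leL at h
  omega

theorem mul_simple_left (h : leL cs u v) (hv : cs.IsRightDescent v i)
    (hu : ¬cs.IsRightDescent u i) : leL cs (u * s i) v := by
  have hlen := h.length_mul_simple_mul_inv_add_one hv hu
  have hu' := cs.not_isRightDescent_iff.mp hu
  unfold leL at h ⊢
  rw [show v * (u * s i)⁻¹ = v * s i * u⁻¹ by simp [mul_assoc]]
  omega

theorem mul_simple_right (h : leL cs u v) (hv : cs.IsRightDescent v i)
    (hu : ¬cs.IsRightDescent u i) : leL cs u (v * s i) := by
  have hlen := h.length_mul_simple_mul_inv_add_one hv hu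
  have hv' := cs.isRightDescent_iff.mp hv
  unfold leL at h ⊢
  omega

end leL

variable (cs) in
def IsLeftWeakContraction (f : W → W) : Prop :=
  ∀ ⦃u v : W⦄, leL cs u v → leL cs (f u) (f v) ∧
    (f v * (f u)⁻¹ = v * u⁻¹ ∨ ℓ (f v * (f u)⁻¹) < ℓ (v * u⁻¹))

theorem isLeftWeakContraction_id : IsLeftWeakContraction cs id :=
  fun _ _ h => ⟨h, Or.inl rfl⟩

theorem IsLeftWeakContraction.comp {f g : W → W} (hf : IsLeftWeakContraction cs f)
    (hg : IsLeftWeakContraction cs g) : IsLeftWeakContraction cs (f ∘ g) := by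
  intro u v h
  obtain ⟨hg₁, hg₂⟩ := hg h
  obtain ⟨hf₁, hf₂⟩ := hf hg₁
  refine ⟨hf₁, ?_⟩
  rcases hf₂ with hf₂ | hf₂ <;> rcases hg₂ with hg₂ | hg₂
  · exact Or.inl (hf₂.trans hg₂)
  · exact Or.inr (hf₂ ▸ hg₂)
  · exact Or.inr (hg₂ ▸ hf₂)
  · exact Or.inr (hf₂.trans hg₂)

theorem IsLeftWeakContraction.iterate {f : W → W} (hf : IsLeftWeakContraction cs f) (n : ℕ) :
    IsLeftWeakContraction cs f^[n] := by
  induction n with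
  | zero => exact isLeftWeakContraction_id
  | succ n ih => rw [Function.iterate_succ]; exact ih.comp hf

theorem piOp_of_isRightDescent {w : W} {i : B} (h : cs.IsRightDescent w i) :
    piOp cs i w = w := if_pos h

theorem piOp_of_not_isRightDescent {w : W} {i : B} (h : ¬cs.IsRightDescent w i) :
    piOp cs i w = w * s i := if_neg h

theorem pibOp_of_isRightDescent {w : W} {i : B} (h : cs.IsRightDescent w i) :
    pibOp cs i w = w * s i := if_pos h

theorem pibOp_of_not_isRightDescent {w : W} {i : B} (h : ¬cs.IsRightDescent w i) :
    pibOp cs i w = w := if_neg h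

theorem isLeftWeakContraction_piOp (i : B) : IsLeftWeakContraction cs (piOp cs i) := by
  intro u v h
  by_cases hu : cs.IsRightDescent u i
  · rw [piOp_of_isRightDescent hu, piOp_of_isRightDescent (h.isRightDescent hu)]
    exact ⟨h, Or.inl rfl⟩
  by_cases hv : cs.IsRightDescent v i
  · rw [piOp_of_not_isRightDescent hu, piOp_of_isRightDescent hv]
    refine ⟨h.mul_simple_left hv hu, Or.inr ?_⟩
    rw [show v * (u * s i)⁻¹ = v * s i * u⁻¹ by simp [mul_assoc]]
    exact cs.length_mul_simple_mul_inv_lt hv hu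
  · rw [piOp_of_not_isRightDescent hu, piOp_of_not_isRightDescent hv]
    exact ⟨h.mul_simple (iff_of_false hu hv), Or.inl (by simp [mul_assoc])⟩

theorem isLeftWeakContraction_pibOp (i : B) : IsLeftWeakContraction cs (pibOp cs i) := by
  intro u v h
  by_cases hv : cs.IsRightDescent v i
  · by_cases hu : cs.IsRightDescent u i
    · rw [pibOp_of_isRightDescent hu, pibOp_of_isRightDescent hv]
      exact ⟨h.mul_simple (iff_of_true hu hv), Or.inl (by simp [mul_assoc])⟩
    · rw [pibOp_of_not_isRightDescent hu, pibOp_of_isRightDescent hv]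
      exact ⟨h.mul_simple_right hv hu, Or.inr (cs.length_mul_simple_mul_inv_lt hv hu)⟩
  · rw [pibOp_of_not_isRightDescent (mt h.isRightDescent hv), pibOp_of_not_isRightDescent hv]
    exact ⟨h, Or.inl rfl⟩

theorem isLeftWeakContraction_of_mem_biHecke {f : Function.End W} (hf : f ∈ biHecke cs) :
    IsLeftWeakContraction cs f := by
  induction hf using Submonoid.closure_induction with
  | mem f hf =>
    rcases hf with ⟨i, rfl⟩ | ⟨i, rfl⟩
    · exact isLeftWeakContraction_piOp i
    · exact isLeftWeakContraction_pibOp i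
  | one => exact isLeftWeakContraction_id
  | mul f g _ _ hf hg => exact hf.comp hg

end LeftWeakOrder

namespace Function

variable {α : Type*}

theorem exists_isPeriodicPt_iterate [Finite α] (f : α → α) (x : α) :
    ∃ i n, 0 < n ∧ IsPeriodicPt f n (f^[i] x) := by
  obtain ⟨i, j, hne, heq⟩ := Finite.exists_ne_map_eq_of_infinite fun n => f^[n] x
  rcases hne.lt_or_gt with hij | hji
  · refine ⟨i, j - i, by omega, ?_⟩
    rw [IsPeriodicPt, IsFixedPt, ← iterate_add_apply, Nat.sub_add_cancel hij.le]
    exact heq.symm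
  · refine ⟨j, i - j, by omega, ?_⟩
    rw [IsPeriodicPt, IsFixedPt, ← iterate_add_apply, Nat.sub_add_cancel hji.le]
    exact heq

theorem exists_pos_forall_isFixedPt_iterate [Finite α] {f : α → α}
    (h : ∀ x n, 0 < n → IsPeriodicPt f n x → IsFixedPt f x) :
    ∃ k, 0 < k ∧ ∀ x, IsFixedPt f (f^[k] x) := by
  have hx : ∀ x, ∀ᶠ k in Filter.atTop, IsFixedPt f (f^[k] x) := by
    intro x
    obtain ⟨i, n, hn, hper⟩ := exists_isPeriodicPt_iterate f x
    refine Filter.eventually_atTop.2 ⟨i, fun k hk => ?_⟩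
    rw [← Nat.sub_add_cancel hk, iterate_add_apply, iterate_fixed (h _ n hn hper)]
    exact h _ n hn hper
  exact ((Filter.eventually_all.2 hx).and (Filter.eventually_gt_atTop 0)).exists.imp
    fun k hk => ⟨hk.2, hk.1⟩

end Function

section Dynamics

variable {B W : Type*} [Group W] {M : CoxeterMatrix B} {cs : CoxeterSystem M W} {f : W → W}

local prefix:100 "ℓ " => cs.length

open Function

theorem IsLeftWeakContraction.isFixedPt_of_leL_apply (hf : IsLeftWeakContraction cs f) {p : W}
    (hp : leL cs p (f p)) {n : ℕ} (hn : 0 < n) (hper : IsPeriodicPt f n p) : IsFixedPt f p := by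
  have hmono : Monotone fun k => ℓ (f^[k] p) := by
    refine monotone_nat_of_le_succ fun k => ?_
    have := ((hf.iterate k) hp).1
    rw [← iterate_succ_apply] at this
    exact this.length_le
  have hle : ℓ (f p) ≤ ℓ p := by
    simpa [hper.eq] using hmono (Nat.one_le_iff_ne_zero.mpr hn.ne')
  exact hp.eq_of_length_le hle

theorem IsLeftWeakContraction.isFixedPt_of_leL (hf : IsLeftWeakContraction cs f) {a w : W}
    (ha : IsFixedPt f a) (haw : leL cs a w) {n : ℕ} (hn : 0 < n) (hw : IsPeriodicPt f n w) :
    IsFixedPt f w := by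
  obtain ⟨m, rfl⟩ : ∃ m, n = m + 1 := ⟨n - 1, by omega⟩
  obtain ⟨hle, hfaw | hlt⟩ := hf haw
  · rw [ha.eq] at hfaw
    exact mul_right_cancel hfaw
  · rw [ha.eq] at hle hlt
    obtain ⟨-, hback | hback⟩ := hf.iterate m hle
    all_goals rw [← iterate_succ_apply, hw.eq, iterate_fixed ha] at hback
    · exact mul_right_cancel hback.symm
    · exact absurd (hback.trans hlt) (lt_irrefl _)

theorem IsLeftWeakContraction.isFixedPt_of_isPeriodicPt [Finite W]
    (hf : IsLeftWeakContraction cs f) {w : W} {n : ℕ} (hn : 0 < n) (hw : IsPeriodicPt f n w) :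
    IsFixedPt f w := by
  obtain ⟨i, q, hq, hper⟩ := exists_isPeriodicPt_iterate f 1
  have hfix : IsFixedPt f (f^[i] 1) := by
    refine hf.isFixedPt_of_leL_apply ?_ hq hper
    rw [← iterate_succ_apply' f i, iterate_succ_apply]
    exact ((hf.iterate i) (leL_one (f 1))).1
  have hbelow : leL cs (f^[i] 1) w := by
    have hi : i ≤ n * i := Nat.le_mul_of_pos_left i hn
    rw [← iterate_fixed hfix (n * i - i), ← iterate_add_apply, Nat.sub_add_cancel hi,
      ← (hw.mul_const i).eq]
    exact ((hf.iterate (n * i)) (leL_one w)).1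
  exact hf.isFixedPt_of_leL hfix hbelow hn hw

end Dynamics

/-- The biHecke monoid is acyclic: every element `f` satisfies `f^{k+1} = f^k` for some
`k > 0`; in particular `f^k` is idempotent. -/
theorem biHecke_acyclic {B W : Type*} [Group W] [Finite W] {M : CoxeterMatrix B}
    (cs : CoxeterSystem M W) (f : Function.End W) (hf : f ∈ biHecke cs) :
    ∃ k : ℕ, 0 < k ∧ f ^ (k + 1) = f ^ k ∧ IsIdempotentElem (f ^ k) := by
  have hcontr := isLeftWeakContraction_of_mem_biHecke hf
  obtain ⟨k, hk, hfix⟩ := Function.exists_pos_forall_isFixedPt_iterate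
    fun w _ hn hw => hcontr.isFixedPt_of_isPeriodicPt hn hw
  have hpow (n : ℕ) (w : W) : (f ^ n) w = f^[n] w :=
    congrFun (hom_coe_pow (fun g : Function.End W => (g : W → W)) rfl (fun _ _ => rfl) f n) w
  refine ⟨k, hk, funext fun w => ?_, funext fun w => ?_⟩
  · rw [hpow, hpow]
    exact (Function.iterate_succ_apply' f k w).trans (hfix w)
  · change (f ^ k) ((f ^ k) w) = (f ^ k) w
    rw [hpow]
    exact Function.iterate_fixed (hfix w) k
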